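/- arXiv:2503.04010 — 4 statements merged into one kernel-verified Lean document; each statement's English description precedes it below -/
import Mathlib

section
/- Let d ≥ 2, ε ∈ (0, 1/4], and Θ = ([-1,1]_ε \ {0})^d where [-1,1]_ε denotes the ε-grid {ε·n : n ∈ ℤ} ∩ [-1,1]. Let A ⊆ [-1,1]^d be a finite action set containing the hypercube {-1,1}^d. If θ* ∈ Θ satisfies ‖θ*‖₁ − 2·min_i |θ*_i| ≥ dε, then there exists θ' ∈ Θ and an arm a' ∈ A such that a' is the unique best arm for θ' (i.e., ⟨θ', a'⟩ > ⟨θ', a⟩ for all a ∈ A with a ≠ a'), ⟨θ', a'⟩ = ⟨θ*, a'⟩, and ⟨θ*, a'⟩ < max_{a ∈ A} ⟨θ*, a⟩. -/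
/-!
Write `|θ*_i| = ε m_i` with `1 ≤ m_i ≤ ⌊1/ε⌋`. Flipping `sign θ*` at a coordinate `i₀` where `|θ*_i|`
is smallest gives a hypercube arm `a'` with `⟨θ*, a'⟩ = ε N`, where `N = ∑ m_i - 2 m_{i₀} ≥ d` by the
gap hypothesis; this is strictly less than `⟨θ*, sign θ*⟩ = ‖θ*‖₁`. Splitting `N = ∑ k_i` with
`1 ≤ k_i ≤ ⌊1/ε⌋` and setting `θ'_i = ε k_i a'_i` gives a grid parameter whose coordinates are
nonzero with signs `a'`, so `a'` is its unique best arm in `[-1,1]^d`, and `⟨θ', a'⟩ = ε N`.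
-/

open Finset

lemma exists_sum_eq_of_mul_le_of_le_mul {L M d N : ℕ} (hL : d * L ≤ N) (hM : N ≤ d * M) :
    ∃ k : Fin d → ℕ, (∀ i, L ≤ k i ∧ k i ≤ M) ∧ ∑ i, k i = N := by
  induction d generalizing N with
  | zero => exact ⟨Fin.elim0, fun i => i.elim0, by simp_all⟩
  | succ d ih =>
    rw [Nat.succ_mul] at hL hM
    have hLM : L ≤ M := by nlinarith
    have hdLM : d * L ≤ d * M := Nat.mul_le_mul_left d hLM
    set k₀ := min M (N - d * L)
    obtain ⟨k, hk, hsum⟩ := ih (N := N - k₀) (by omega) (by omega)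
    refine ⟨Fin.cons k₀ k, Fin.forall_fin_succ.mpr ⟨⟨?_, min_le_left _ _⟩, hk⟩, ?_⟩
    · show L ≤ k₀; omega
    · rw [Fin.sum_cons, hsum]; omega

/-- The grid `[-1,1]_ε \ {0}`. -/
def nonzeroGrid (ε : ℝ) : Set ℝ := {x | (∃ n : ℤ, x = ε * n) ∧ |x| ≤ 1 ∧ x ≠ 0}

lemma exists_abs_eq_mul_of_mem_nonzeroGrid {ε x : ℝ} (hε : 0 < ε) (hx : x ∈ nonzeroGrid ε) :
    ∃ m : ℕ, |x| = ε * m ∧ 1 ≤ m ∧ m ≤ ⌊1 / ε⌋₊ := by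
  obtain ⟨⟨n, rfl⟩, hle, hne⟩ := hx
  have habs : |ε * n| = ε * n.natAbs := by
    rw [abs_mul, abs_of_pos hε, Nat.cast_natAbs, Int.cast_abs]
  refine ⟨n.natAbs, habs, Int.natAbs_pos.mpr ?_, Nat.le_floor ?_⟩
  · rintro rfl
    simp at hne
  · rwa [le_div_iff₀ hε, mul_comm, ← habs]

lemma mul_mem_nonzeroGrid {ε : ℝ} (hε : 0 < ε) {k : ℕ} (hk : 1 ≤ k) (hkε : k ≤ ⌊1 / ε⌋₊) {s : ℝ}
    (hs : s = 1 ∨ s = -1) : ε * k * s ∈ nonzeroGrid ε := by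
  have hpos : 0 < ε * k := by positivity
  have hle : ε * k ≤ 1 := by
    have := (Nat.cast_le (α := ℝ)).mpr hkε |>.trans (Nat.floor_le (by positivity))
    rwa [le_div_iff₀ hε, mul_comm] at this
  rcases hs with rfl | rfl
  · exact ⟨⟨k, by simp⟩, by simpa [abs_of_pos hpos] using hle, by simpa using hpos.ne'⟩
  · exact ⟨⟨-k, by simp⟩, by simpa [abs_of_pos hpos] using hle, by simpa using hpos.ne'⟩

section SignVector

variable {ι : Type*}

lemma sum_mul_lt_of_ne_of_abs_le [Fintype ι] {w s a : ι → ℝ} (hw : ∀ i, 0 < w i)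
    (hs : ∀ i, s i = 1 ∨ s i = -1) (ha : ∀ i, |a i| ≤ 1) (hne : a ≠ s) :
    ∑ i, w i * s i * a i < ∑ i, w i * s i * s i := by
  have hle : ∀ i, s i * a i ≤ s i * s i := fun i => by
    have := abs_le.mp (ha i)
    rcases hs i with h | h <;> rw [h] <;> linarith
  obtain ⟨j, hj⟩ := Function.ne_iff.mp hne
  have hlt : s j * a j < s j * s j := by
    have := abs_le.mp (ha j)
    rcases hs j with h | h <;> rw [h] at hj ⊢
    · linarith [lt_of_le_of_ne this.2 hj]
    · linarith [lt_of_le_of_ne' this.1 hj]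
  simp only [mul_assoc]
  exact sum_lt_sum (fun i _ => mul_le_mul_of_nonneg_left (hle i) (hw i).le)
    ⟨j, mem_univ j, mul_lt_mul_of_pos_left hlt (hw j)⟩

lemma sum_mul_update_neg [Fintype ι] [DecidableEq ι] (f g : ι → ℝ) (j : ι) :
    ∑ i, f i * Function.update g j (-g j) i = ∑ i, f i * g i - 2 * (f j * g j) := by
  rw [← add_sum_erase _ _ (mem_univ j), ← add_sum_erase _ _ (mem_univ j),
    sum_congr rfl fun i hi => by rw [Function.update_of_ne (ne_of_mem_erase hi)]]
  simp only [Function.update_self]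
  ring

lemma sign_eq_one_or_eq_neg_one {x : ℝ} (hx : x ≠ 0) :
    (SignType.sign x : ℝ) = 1 ∨ (SignType.sign x : ℝ) = -1 := by
  rcases hx.lt_or_gt with h | h
  · simp [sign_neg h]
  · simp [sign_pos h]

lemma update_neg_eq_one_or_eq_neg_one [DecidableEq ι] {g : ι → ℝ}
    (hg : ∀ i, g i = 1 ∨ g i = -1) (j i : ι) :
    Function.update g j (-g j) i = 1 ∨ Function.update g j (-g j) i = -1 := by
  rcases eq_or_ne i j with rfl | h
  · rcases hg i with h | h <;> simp [h]
  · simpa [h] using hg i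

end SignVector

theorem exists_mem_nonzeroGrid_forall_lt_of_le {d : ℕ} {ε : ℝ} (hε : 0 < ε) {s : Fin d → ℝ}
    (hs : ∀ i, s i = 1 ∨ s i = -1) {N : ℕ} (hdN : d ≤ N) (hNd : N ≤ d * ⌊1 / ε⌋₊) :
    ∃ θ : Fin d → ℝ, (∀ i, θ i ∈ nonzeroGrid ε) ∧
      (∀ a : Fin d → ℝ, (∀ i, |a i| ≤ 1) → a ≠ s → ∑ i, θ i * a i < ∑ i, θ i * s i) ∧
      ∑ i, θ i * s i = ε * N := by
  obtain ⟨k, hk, hsum⟩ := exists_sum_eq_of_mul_le_of_le_mul (L := 1) (by simpa using hdN) hNd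
  refine ⟨fun i => ε * k i * s i, fun i => mul_mem_nonzeroGrid hε (hk i).1 (hk i).2 (hs i),
    fun a ha hne => sum_mul_lt_of_ne_of_abs_le (fun i => ?_) hs ha hne, ?_⟩
  · have : (1 : ℝ) ≤ k i := by exact_mod_cast (hk i).1
    positivity
  · have hss : ∀ i, s i * s i = 1 := fun i => by rcases hs i with h | h <;> simp [h]
    simp only [mul_assoc, hss, mul_one, ← mul_sum]
    rw [← hsum, Nat.cast_sum]

lemma exists_nat_sum_abs_sub_eq_mul {d : ℕ} {ε : ℝ} (hε : 0 < ε) {θ : Fin d → ℝ}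
    (hθ : ∀ i, θ i ∈ nonzeroGrid ε) (j : Fin d) (hgap : d * ε ≤ ∑ i, |θ i| - 2 * |θ j|) :
    ∃ N : ℕ, d ≤ N ∧ N ≤ d * ⌊1 / ε⌋₊ ∧ ∑ i, |θ i| - 2 * |θ j| = ε * N := by
  choose m hm using fun i => exists_abs_eq_mul_of_mem_nonzeroGrid hε (hθ i)
  have hl1 : ∑ i, |θ i| = ε * (∑ i, m i : ℕ) := by
    simp only [(hm _).1, Nat.cast_sum, mul_sum]
  have hle : d + 2 * m j ≤ ∑ i, m i := by
    rw [hl1, (hm j).1] at hgap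
    have : ((d + 2 * m j : ℕ) : ℝ) ≤ (∑ i, m i : ℕ) := by
      push_cast at hgap ⊢
      nlinarith
    exact_mod_cast this
  obtain ⟨N, hN⟩ := Nat.exists_eq_add_of_le (le_of_add_le_right hle)
  refine ⟨N, by omega, ?_, ?_⟩
  · calc N ≤ ∑ i, m i := by omega
      _ ≤ ∑ _i : Fin d, ⌊1 / ε⌋₊ := sum_le_sum fun i _ => (hm i).2.2
      _ = d * ⌊1 / ε⌋₊ := by simp
  · rw [hl1, hN, (hm j).1]
    push_cast
    ring

/-- Discretized linear bandits: almost every instance has a decoy. -/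
theorem linear_bandits_decoy (d : ℕ) (hd : 2 ≤ d) (ε : ℝ) (hε0 : 0 < ε)
    (A : Finset (Fin d → ℝ))
    (hA1 : ∀ a ∈ A, ∀ i, |a i| ≤ 1)
    (hAcube : ∀ a : Fin d → ℝ, (∀ i, a i = 1 ∨ a i = -1) → a ∈ A)
    (θs : Fin d → ℝ)
    (hθs : ∀ i, (∃ n : ℤ, θs i = ε * n) ∧ |θs i| ≤ 1 ∧ θs i ≠ 0)
    (hgap : (∑ i, |θs i|) - 2 * (Finset.univ.inf' ⟨⟨0, by omega⟩, Finset.mem_univ _⟩ fun i => |θs i|)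
      ≥ d * ε) :
    ∃ θ' : Fin d → ℝ,
      (∀ i, (∃ n : ℤ, θ' i = ε * n) ∧ |θ' i| ≤ 1 ∧ θ' i ≠ 0) ∧
      ∃ a' ∈ A,
        (∀ a ∈ A, a ≠ a' → ∑ i, θ' i * a i < ∑ i, θ' i * a' i) ∧
        (∑ i, θ' i * a' i) = (∑ i, θs i * a' i) ∧
        (∃ a ∈ A, (∑ i, θs i * a' i) < ∑ i, θs i * a i) := by
  obtain ⟨i₀, -, hi₀⟩ := exists_mem_eq_inf' ⟨⟨0, by omega⟩, mem_univ _⟩ fun i => |θs i|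
  obtain ⟨N, hdN, hNd, hN⟩ := exists_nat_sum_abs_sub_eq_mul hε0 hθs i₀ (hi₀ ▸ hgap)
  set s : Fin d → ℝ := fun i => SignType.sign (θs i)
  have hs : ∀ i, s i = 1 ∨ s i = -1 := fun i => sign_eq_one_or_eq_neg_one (hθs i).2.2
  have hnorm : ∑ i, θs i * s i = ∑ i, |θs i| := by simp only [s, self_mul_sign]
  set a' := Function.update s i₀ (-s i₀)
  have ha' : ∀ i, a' i = 1 ∨ a' i = -1 := update_neg_eq_one_or_eq_neg_one hs i₀
  have hval : ∑ i, θs i * a' i = ε * N := by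
    rw [sum_mul_update_neg, hnorm, self_mul_sign, hN]
  obtain ⟨θ', hθ', hbest, hθ'a'⟩ := exists_mem_nonzeroGrid_forall_lt_of_le hε0 ha' hdN hNd
  refine ⟨θ', hθ', a', hAcube a' ha', fun a ha => hbest a (hA1 a ha), hθ'a'.trans hval.symm,
    s, hAcube s hs, ?_⟩
  rw [hval, ← hN, hnorm]
  linarith [abs_pos.mpr (hθs i₀).2.2]
end

section
/- Let A be a finite nonempty set of arms, and for each a ∈ A let S_a ⊆ ℝ^d be a finite set spanning ℝ^d. Let X = ∏_{a∈A} S_a and let π : X → A be any policy. Then there exists a finite set X₀ ⊆ X with |X₀| ≤ d such that the vectors {x(π(x)) : x ∈ X₀} span ℝ^d. -/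
/-!
Whatever proper subspace `W` we are given, choosing in every arm a feature outside `W` yields a
context whose chosen feature lies outside `W`. Hence the chosen features of all contexts span
`ℝ^d`, and a basis extracted from them consists of `d` vectors, each the chosen feature of some
context.
-/

open Submodule Module

theorem Submodule.span_image_policy_eq_top {R V A : Type*} [Semiring R] [AddCommMonoid V]
    [Module R V] (S : A → Set V) (hS : ∀ a, span R (S a) = ⊤) (π : (A → V) → A) :
    span R ((fun x ↦ x (π x)) '' Set.univ.pi S) = ⊤ := by
  by_contra hW
  have hmiss : ∀ a, ∃ v ∈ S a, v ∉ span R ((fun x ↦ x (π x)) '' Set.univ.pi S) := fun a ↦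
    Set.not_subset.mp fun hsub ↦ hW (eq_top_iff.mpr (hS a ▸ span_le.mpr hsub))
  choose x hxS hxW using hmiss
  exact hxW (π x) (subset_span ⟨x, fun a _ ↦ hxS a, rfl⟩)

theorem Submodule.exists_finset_card_le_finrank_span_image_eq {K V X : Type*} [DivisionRing K]
    [AddCommGroup V] [Module K V] (φ : X → V) (P : Set X) [Module.Finite K (span K (φ '' P))] :
    ∃ X₀ : Finset X, ↑X₀ ⊆ P ∧ X₀.card ≤ finrank K (span K (φ '' P)) ∧
      span K (φ '' X₀) = span K (φ '' P) := by
  classical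
  obtain ⟨b, hbP, hbspan, -⟩ := exists_fun_fin_finrank_span_eq K (φ '' P)
  choose g hgP hgb using hbP
  refine ⟨Finset.univ.image g, by simpa [Set.range_subset_iff] using hgP, ?_, ?_⟩
  · exact Finset.card_image_le.trans_eq (Finset.card_fin _)
  · rw [Finset.coe_image, Finset.coe_univ, Set.image_univ, ← Set.range_comp,
      show φ ∘ g = b from funext hgb, hbspan]

theorem exists_spanning_contexts_general (d : ℕ)
    (A : Type*)
    (S : A → Finset (Fin d → ℝ))
    (hS : ∀ a, Submodule.span ℝ (S a : Set (Fin d → ℝ)) = ⊤)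
    (π : (A → (Fin d → ℝ)) → A) :
    ∃ X₀ : Finset (A → (Fin d → ℝ)),
      X₀.card ≤ d ∧
      (∀ x ∈ X₀, ∀ a, x a ∈ S a) ∧
      Submodule.span ℝ {v : Fin d → ℝ | ∃ x ∈ X₀, v = x (π x)} = ⊤ := by
  have htop := span_image_policy_eq_top (fun a ↦ (S a : Set (Fin d → ℝ))) hS π
  obtain ⟨X₀, hX₀, hcard, hspan⟩ :=
    exists_finset_card_le_finrank_span_image_eq (K := ℝ) (fun x ↦ x (π x))
      (Set.univ.pi fun a ↦ (S a : Set (Fin d → ℝ)))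
  rw [htop, finrank_top, finrank_fin_fun] at hcard
  refine ⟨X₀, hcard, fun x hx a ↦ hX₀ hx a trivial, ?_⟩
  have hset : {v : Fin d → ℝ | ∃ x ∈ X₀, v = x (π x)} =
      (fun x : A → Fin d → ℝ ↦ x (π x)) '' X₀ := by
    ext v
    simp [eq_comm]
  rwa [hset, ← htop]

/-- Greedy span construction: for any policy π there is a set of at most d
contexts whose chosen-arm feature vectors span ℝ^d. -/
theorem exists_spanning_contexts (d : ℕ)
    (A : Type*) [Fintype A] [Nonempty A]
    (S : A → Finset (Fin d → ℝ))
    (hS : ∀ a, Submodule.span ℝ (S a : Set (Fin d → ℝ)) = ⊤)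
    (π : (A → (Fin d → ℝ)) → A) :
    ∃ X₀ : Finset (A → (Fin d → ℝ)),
      X₀.card ≤ d ∧
      (∀ x ∈ X₀, ∀ a, x a ∈ S a) ∧
      Submodule.span ℝ {v : Fin d → ℝ | ∃ x ∈ X₀, v = x (π x)} = ⊤ :=
  exists_spanning_contexts_general d A S hS π
end

section
/- Let d ≥ 1, Θ ⊆ ℝ^d finite, and for each arm a ∈ A (A finite) let S_a ⊆ [-1,1]^d be finite and span ℝ^d. Let X = ∏_a S_a, and define f_θ(x, a) = ⟨x(a), θ⟩. Then for every θ* ∈ Θ and every policy π : X → A, if θ ∈ Θ satisfies ⟨x(π(x)), θ⟩ = ⟨x(π(x)), θ*⟩ for all x ∈ X, then θ = θ*. (Hence self-identifiability holds: observing the rewards of any policy on all contexts determines the parameter.) -/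
/-!
If `θ ≠ θ*`, the nonzero direction `w = θ - θ*` is orthogonal to no spanning set, so every arm `a` has
a feature `x a ∈ S a` with `⟨x a, w⟩ ≠ 0`. On the context `x` every arm, in particular the one
the policy picks, separates `θ` from `θ*`.
-/

open Matrix Submodule

theorem LinearMap.exists_mem_apply_ne_zero_of_span_eq_top {R M N : Type*} [Semiring R]
    [AddCommMonoid M] [Module R M] [AddCommMonoid N] [Module R N] {s : Set M}
    (hs : span R s = ⊤) {f : M →ₗ[R] N} (hf : f ≠ 0) : ∃ v ∈ s, f v ≠ 0 := by
  by_contra! h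
  exact hf (LinearMap.ext_on hs h)

theorem exists_mem_dotProduct_ne_zero_of_span_eq_top {ι R : Type*} [Fintype ι] [CommRing R]
    [LinearOrder R] [IsStrictOrderedRing R] {s : Set (ι → R)} (hs : span R s = ⊤)
    {w : ι → R} (hw : w ≠ 0) : ∃ v ∈ s, v ⬝ᵥ w ≠ 0 := by
  have hf : (dotProductBilin R R).flip w ≠ 0 := fun h ↦
    hw (dotProduct_self_eq_zero.mp (LinearMap.congr_fun h w))
  exact LinearMap.exists_mem_apply_ne_zero_of_span_eq_top hs hf

theorem exists_forall_mem_forall_dotProduct_ne_zero {ι R A : Type*} [Fintype ι] [CommRing R]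
    [LinearOrder R] [IsStrictOrderedRing R] {S : A → Set (ι → R)}
    (hS : ∀ a, span R (S a) = ⊤) {w : ι → R} (hw : w ≠ 0) :
    ∃ x : A → ι → R, (∀ a, x a ∈ S a) ∧ ∀ a, x a ⬝ᵥ w ≠ 0 := by
  choose x hxS hx using fun a ↦ exists_mem_dotProduct_ne_zero_of_span_eq_top (hS a) hw
  exact ⟨x, hxS, hx⟩

theorem linear_cb_self_identifiable_general (d : ℕ)
    (A : Type*)
    (S : A → Finset (Fin d → ℝ))
    (hSspan : ∀ a, Submodule.span ℝ (S a : Set (Fin d → ℝ)) = ⊤)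
    (θs : Fin d → ℝ)
    (π : (A → (Fin d → ℝ)) → A)
    (θ : Fin d → ℝ)
    (hagree : ∀ x : A → (Fin d → ℝ), (∀ a, x a ∈ S a) →
      ∑ i, x (π x) i * θ i = ∑ i, x (π x) i * θs i) :
    θ = θs := by
  by_contra hne
  obtain ⟨x, hxS, hx⟩ :=
    exists_forall_mem_forall_dotProduct_ne_zero hSspan (sub_ne_zero.mpr hne)
  apply hx (π x)
  rw [dotProduct_sub]
  exact sub_eq_zero.mpr (hagree x hxS)

/-- Self-identifiability for linear contextual bandits with per-arm spanning
context sets: the rewards of any policy on all contexts determine θ*. -/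
theorem linear_cb_self_identifiable (d : ℕ) (hd : 1 ≤ d)
    (Θ : Finset (Fin d → ℝ))
    (A : Type*) [Fintype A] [Nonempty A]
    (S : A → Finset (Fin d → ℝ))
    (hSbdd : ∀ a, ∀ v ∈ S a, ∀ i, |v i| ≤ 1)
    (hSspan : ∀ a, Submodule.span ℝ (S a : Set (Fin d → ℝ)) = ⊤)
    (θs : Fin d → ℝ) (hθs : θs ∈ Θ)
    (π : (A → (Fin d → ℝ)) → A)
    (θ : Fin d → ℝ) (hθ : θ ∈ Θ)
    (hagree : ∀ x : A → (Fin d → ℝ), (∀ a, x a ∈ S a) →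
      ∑ i, x (π x) i * θ i = ∑ i, x (π x) i * θs i) :
    θ = θs :=
  linear_cb_self_identifiable_general d A S hSspan θs π θ hagree
end

section
/- Let (A, D) be a finite metric space, ε > 0, and R = {ε·n : n ∈ ℕ} ∩ [0,1]. Assume D takes values in R. Let f : A → R be a 1-Lipschitz function with respect to D (|f(a) − f(a')| ≤ D(a,a')) with a unique maximizer a*, and suppose there exists an arm a₀ ≠ a* with 0 < f(a₀) < f(a*). Then the function f'(a) := max(0, f(a₀) − D(a₀, a)) satisfies: (i) f' takes values in R, (ii) f' is 1-Lipschitz with respect to D, (iii) a₀ is the unique maximizer of f', and (iv) f'(a₀) = f(a₀) < f(a*). -/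
/-!
The decoy is the cone of height `f a₀` around `a₀`. Every cone `y ↦ max 0 (h - D(x, y))` is
1-Lipschitz by the triangle inequality, peaks only at its apex when `h > 0`, and stays in the
grid when `h` and `D` do, because the positive part of a difference of grid points is a grid point.
-/

theorem max_zero_mul_natCast_sub_mul_natCast {ε : ℝ} (hε : 0 ≤ ε) (m n : ℕ) :
    max 0 (ε * m - ε * n) = ε * ↑(m - n) := by
  rcases le_total n m with hnm | hmn
  · rw [Nat.cast_sub hnm, mul_sub, max_eq_right]
    exact sub_nonneg.2 (mul_le_mul_of_nonneg_left (Nat.cast_le.2 hnm) hε)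
  · rw [Nat.sub_eq_zero_of_le hmn, max_eq_left]
    · simp
    · exact sub_nonpos.2 (mul_le_mul_of_nonneg_left (Nat.cast_le.2 hmn) hε)

section Cone

variable {X : Type*}

def cone [PseudoMetricSpace X] (x : X) (h : ℝ) (y : X) : ℝ := max 0 (h - dist x y)

section Pseudo

variable [PseudoMetricSpace X] (x : X) {h : ℝ}

theorem cone_self (hh : 0 ≤ h) : cone x h x = h := by
  simp [cone, hh]

theorem cone_le_one (hh : h ≤ 1) (y : X) : cone x h y ≤ 1 :=
  max_le zero_le_one (by linarith [dist_nonneg (x := x) (y := y)])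

theorem abs_cone_sub_cone_le (h : ℝ) (y y' : X) : |cone x h y - cone x h y'| ≤ dist y y' :=
  calc |cone x h y - cone x h y'|
      ≤ |(h - dist x y) - (h - dist x y')| := by
        simpa only [cone, max_comm] using abs_max_sub_max_le_abs (h - dist x y) (h - dist x y') 0
    _ = |dist y x - dist y' x| := by
        rw [sub_sub_sub_cancel_left, dist_comm x y, dist_comm x y', abs_sub_comm]
    _ ≤ dist y y' := abs_dist_sub_le y y' x

theorem exists_cone_eq_mul_natCast {ε : ℝ} (hε : 0 ≤ ε) {m : ℕ} (hm : h = ε * m) (y : X)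
    (hgrid : ∃ n : ℕ, dist x y = ε * n) : ∃ k : ℕ, cone x h y = ε * k := by
  obtain ⟨n, hn⟩ := hgrid
  exact ⟨m - n, by rw [cone, hm, hn, max_zero_mul_natCast_sub_mul_natCast hε]⟩

end Pseudo

theorem cone_lt_cone_self [MetricSpace X] (x : X) {h : ℝ} (hh : 0 < h) {y : X} (hy : y ≠ x) :
    cone x h y < cone x h x := by
  rw [cone_self x hh.le]
  exact max_lt hh (sub_lt_self h (dist_pos.2 hy.symm))

end Cone

theorem lipschitz_bandits_decoy_general (A : Type*) [MetricSpace A]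
    (ε : ℝ) (hε : 0 < ε)
    (hD : ∀ a a' : A, (∃ n : ℕ, dist a a' = ε * n) ∧ dist a a' ≤ 1)
    (f : A → ℝ)
    (hfR : ∀ a, (∃ n : ℕ, f a = ε * n) ∧ f a ≤ 1)
    (astar : A)
    (a₀ : A) (ha₀pos : 0 < f a₀) (ha₀lt : f a₀ < f astar) :
    (∀ a, (∃ n : ℕ, max 0 (f a₀ - dist a₀ a) = ε * n) ∧ max 0 (f a₀ - dist a₀ a) ≤ 1) ∧
    (∀ a a' : A, |max 0 (f a₀ - dist a₀ a) - max 0 (f a₀ - dist a₀ a')| ≤ dist a a') ∧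
    (∀ a, a ≠ a₀ → max 0 (f a₀ - dist a₀ a) < max 0 (f a₀ - dist a₀ a₀)) ∧
    max 0 (f a₀ - dist a₀ a₀) = f a₀ ∧ f a₀ < f astar := by
  obtain ⟨⟨m, hm⟩, hf₀_le_one⟩ := hfR a₀
  refine ⟨fun a => ⟨?_, cone_le_one a₀ hf₀_le_one a⟩, abs_cone_sub_cone_le a₀ (f a₀),
    fun a ha => cone_lt_cone_self a₀ ha₀pos ha, cone_self a₀ ha₀pos.le, ha₀lt⟩
  exact exists_cone_eq_mul_natCast a₀ hε.le hm a (hD a₀ a).1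

/-- Discretized Lipschitz bandits: the cone function f'(a) = max(0, f(a₀) − D(a₀,a))
is a grid-valued Lipschitz decoy for f with decoy arm a₀. -/
theorem lipschitz_bandits_decoy (A : Type*) [MetricSpace A] [Fintype A]
    (ε : ℝ) (hε : 0 < ε)
    (hD : ∀ a a' : A, (∃ n : ℕ, dist a a' = ε * n) ∧ dist a a' ≤ 1)
    (f : A → ℝ)
    (hfR : ∀ a, (∃ n : ℕ, f a = ε * n) ∧ f a ≤ 1)
    (hfLip : ∀ a a' : A, |f a - f a'| ≤ dist a a')
    (astar : A) (hstar : ∀ a, a ≠ astar → f a < f astar)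
    (a₀ : A) (ha₀ : a₀ ≠ astar) (ha₀pos : 0 < f a₀) (ha₀lt : f a₀ < f astar) :
    (∀ a, (∃ n : ℕ, max 0 (f a₀ - dist a₀ a) = ε * n) ∧ max 0 (f a₀ - dist a₀ a) ≤ 1) ∧
    (∀ a a' : A, |max 0 (f a₀ - dist a₀ a) - max 0 (f a₀ - dist a₀ a')| ≤ dist a a') ∧
    (∀ a, a ≠ a₀ → max 0 (f a₀ - dist a₀ a) < max 0 (f a₀ - dist a₀ a₀)) ∧
    max 0 (f a₀ - dist a₀ a₀) = f a₀ ∧ f a₀ < f astar :=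
  lipschitz_bandits_decoy_general A ε hε hD f hfR astar a₀ ha₀pos ha₀lt
end
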